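/- The minimum of χ over ℤ^V equals the minimum of χ over {l ∈ ℤ^V : l ≥ 0} (both minima exist). -/

import Mathlib

/-- Cast an integer-valued lattice point into the rational vector space `V → ℚ`. -/
def toQ {V : Type*} (l : V → ℤ) : V → ℚ := fun v => (l v : ℚ)

/-!
Twice `χ` is integral on `ℤ^V`, and completing the square gives
`χ(x) = B(Z_K, Z_K)/8 - B(x - Z_K/2, x - Z_K/2)/2 ≥ B(Z_K, Z_K)/8`, so `χ` attains a minimum
on `ℤ^V`. For a minimiser `l = l⁺ - l⁻` we have `χ(l) = χ(l⁺) + χ(-l⁻) + B(l⁺, l⁻)`. The cross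
term is nonnegative because `l⁺` and `l⁻` have disjoint supports, and `χ(-m) ≥ 0` for every
`m ≥ 0` by induction on `∑ m_v`: negative definiteness yields `v` with `m_v > 0` and
`B(e_v, m) ≤ -1`, and `χ(-m) = χ(-(m - e_v)) - B(e_v, m) - 1`. Hence `l⁺ ≥ 0` is a minimiser too.
-/

lemma exists_isLeast_of_bddBelow_of_two_mul_int {s : Set ℚ} (hne : s.Nonempty)
    (hbdd : BddBelow s) (hhalf : ∀ q ∈ s, ∃ n : ℤ, 2 * q = n) : ∃ μ, IsLeast s μ := by
  set t : Set ℤ := (fun n : ℤ => (n : ℚ) / 2) ⁻¹' s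
  have exists_mem_t : ∀ q ∈ s, ∃ n ∈ t, q = n / 2 := fun q hq => by
    obtain ⟨n, hn⟩ := hhalf q hq
    obtain rfl : q = n / 2 := by linarith
    exact ⟨n, hq, rfl⟩
  have ht : t.Nonempty := by
    obtain ⟨n, hn, -⟩ := exists_mem_t _ hne.some_mem
    exact ⟨n, hn⟩
  have htbdd : BddBelow t := by
    obtain ⟨b, hb⟩ := hbdd
    refine ⟨⌊2 * b⌋, fun n hn => Int.floor_le_iff.mpr ?_⟩
    linarith [hb hn]
  refine ⟨(sInf t : ℤ) / 2, Int.csInf_mem ht htbdd, fun q hq => ?_⟩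
  obtain ⟨n, hn, rfl⟩ := exists_mem_t q hq
  have : ((sInf t : ℤ) : ℚ) ≤ n := by exact_mod_cast csInf_le htbdd hn
  linarith

section

variable {V : Type*}

lemma toQ_zero : toQ (0 : V → ℤ) = 0 := by
  ext; simp [toQ]

lemma toQ_injective : Function.Injective (toQ : (V → ℤ) → V → ℚ) :=
  fun _ _ h => funext fun v => Int.cast_inj.mp (congrFun h v)

lemma toQ_sub (l k : V → ℤ) : toQ (l - k) = toQ l - toQ k := by
  ext; simp [toQ]

lemma toQ_single [DecidableEq V] (v : V) : toQ (Pi.single v 1) = Pi.single v (1 : ℚ) := by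
  ext w; simp [toQ, Pi.single_apply]

lemma toQ_nonneg {l : V → ℤ} (hl : 0 ≤ l) : 0 ≤ toQ l := fun v => by
  simpa [toQ] using hl v

lemma toQ_posPart (l : V → ℤ) : toQ l⁺ = (toQ l)⁺ := by
  ext v; simp [toQ, posPart_def]

lemma toQ_negPart (l : V → ℤ) : toQ l⁻ = (toQ l)⁻ := by
  ext v; simp [toQ, negPart_def]

variable (B : LinearMap.BilinForm ℚ (V → ℚ)) (ZK : V → ℚ)

def chi (x : V → ℚ) : ℚ := -(B x (x - ZK)) / 2

variable {B ZK}

lemma chi_add (hsymm : ∀ x y : V → ℚ, B x y = B y x) (x y : V → ℚ) :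
    chi B ZK (x + y) = chi B ZK x + chi B ZK y - B x y := by
  simp only [chi, map_add, map_sub, LinearMap.add_apply]
  linarith [hsymm x y]

lemma le_chi (hsymm : ∀ x y : V → ℚ, B x y = B y x) (hnonpos : ∀ x, B x x ≤ 0) (x : V → ℚ) :
    B ZK ZK / 8 ≤ chi B ZK x := by
  have h := hnonpos (x - (1 / 2 : ℚ) • ZK)
  simp only [chi, map_sub, map_smul, LinearMap.sub_apply, LinearMap.smul_apply,
    smul_eq_mul] at h ⊢
  linarith [hsymm ZK x]

lemma chi_neg_eq_chi_neg_sub_single [DecidableEq V] (hsymm : ∀ x y : V → ℚ, B x y = B y x)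
    (hZK : ∀ v, B ZK (Pi.single v 1) = B (Pi.single v 1) (Pi.single v 1) + 2)
    (x : V → ℚ) (v : V) :
    chi B ZK (-x) = chi B ZK (-(x - Pi.single v 1)) - B (Pi.single v 1) x - 1 := by
  simp only [chi, map_neg, map_sub, LinearMap.neg_apply, LinearMap.sub_apply]
  linarith [hsymm x (Pi.single v 1), hsymm ZK (Pi.single v 1), hZK v]

variable [Fintype V] [DecidableEq V]

lemma bilin_eq_sum_left (x y : V → ℚ) : B x y = ∑ v, x v * B (Pi.single v 1) y := by
  conv_lhs => rw [← Finset.univ_sum_single x]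
  simp_rw [LinearMap.BilinForm.sum_left, ← LinearMap.BilinForm.smul_left, ← Pi.single_smul',
    smul_eq_mul, mul_one]

lemma bilin_eq_sum_sum (x y : V → ℚ) :
    B x y = ∑ v, ∑ w, x v * y w * B (Pi.single v 1) (Pi.single w 1) := by
  conv_lhs => rw [← Matrix.toLinearMap₂'_toMatrix' (R := ℚ) B, Matrix.toLinearMap₂'_apply]
  simp only [LinearMap.toMatrix₂'_apply, smul_eq_mul, mul_assoc]

lemma exists_bilin_toQ_eq_intCast
    (hint : ∀ v w : V, ∃ n : ℤ, B (Pi.single v 1) (Pi.single w 1) = n) (l k : V → ℤ) :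
    ∃ n : ℤ, B (toQ l) (toQ k) = n := by
  choose N hN using hint
  exact ⟨∑ v, ∑ w, l v * k w * N v w, by simp [bilin_eq_sum_sum, hN, toQ]⟩

lemma bilin_posPart_negPart_nonneg
    (hoff : ∀ v w : V, v ≠ w → 0 ≤ B (Pi.single v 1) (Pi.single w 1)) (x : V → ℚ) :
    0 ≤ B x⁺ x⁻ := by
  rw [bilin_eq_sum_sum]
  refine Finset.sum_nonneg fun v _ => Finset.sum_nonneg fun w _ => ?_
  obtain rfl | hvw := eq_or_ne v w
  · rcases le_total (x v) 0 with h | h <;> simp [h]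
  · exact mul_nonneg (mul_nonneg (posPart_nonneg _) (negPart_nonneg _)) (hoff v w hvw)

lemma exists_pos_bilin_single_neg (hneg : ∀ x : V → ℚ, x ≠ 0 → B x x < 0)
    {x : V → ℚ} (hx : 0 ≤ x) (hx0 : x ≠ 0) : ∃ v, 0 < x v ∧ B (Pi.single v 1) x < 0 := by
  by_contra! h
  have : 0 ≤ B x x := by
    rw [bilin_eq_sum_left]
    refine Finset.sum_nonneg fun v _ => ?_
    obtain hv | hv := (hx v).lt_or_eq
    · exact mul_nonneg hv.le (h v hv)
    · simp [← hv]
  exact (hneg x hx0).not_ge this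

lemma exists_two_mul_chi_toQ_eq_intCast (hsymm : ∀ x y : V → ℚ, B x y = B y x)
    (hint : ∀ v w : V, ∃ n : ℤ, B (Pi.single v 1) (Pi.single w 1) = n)
    (hZK : ∀ v, B ZK (Pi.single v 1) = B (Pi.single v 1) (Pi.single v 1) + 2) (l : V → ℤ) :
    ∃ n : ℤ, 2 * chi B ZK (toQ l) = n := by
  obtain ⟨a, ha⟩ := exists_bilin_toQ_eq_intCast hint l l
  choose N hN using hint
  have hZ : B (toQ l) ZK = ((∑ v, l v * (N v v + 2) : ℤ) : ℚ) := by
    push_cast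
    rw [bilin_eq_sum_left]
    refine Finset.sum_congr rfl fun v _ => ?_
    rw [hsymm, hZK, hN]
    push_cast [toQ]
    ring
  refine ⟨-a + ∑ v, l v * (N v v + 2), ?_⟩
  simp only [chi, map_sub, ha, hZ]
  push_cast
  ring

lemma chi_neg_toQ_nonneg (hsymm : ∀ x y : V → ℚ, B x y = B y x)
    (hint : ∀ v w : V, ∃ n : ℤ, B (Pi.single v 1) (Pi.single w 1) = n)
    (hneg : ∀ x : V → ℚ, x ≠ 0 → B x x < 0)
    (hZK : ∀ v, B ZK (Pi.single v 1) = B (Pi.single v 1) (Pi.single v 1) + 2)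
    {m : V → ℤ} (hm : 0 ≤ m) : 0 ≤ chi B ZK (-toQ m) := by
  obtain ⟨n, hn⟩ : ∃ n : ℕ, ∑ v, m v = n :=
    ⟨_, (Int.toNat_of_nonneg (Finset.sum_nonneg fun v _ => hm v)).symm⟩
  induction n generalizing m with
  | zero =>
    have : m = 0 := funext fun v =>
      (Finset.sum_eq_zero_iff_of_nonneg fun w _ => hm w).mp hn v (Finset.mem_univ v)
    simp [this, toQ_zero, chi]
  | succ n ih =>
    have hm0 : toQ m ≠ 0 := by
      rw [← toQ_zero, toQ_injective.ne_iff]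
      rintro rfl
      simp at hn
      omega
    obtain ⟨v, hv, hBv⟩ := exists_pos_bilin_single_neg hneg (toQ_nonneg hm) hm0
    have hle : B (Pi.single v 1) (toQ m) ≤ -1 := by
      obtain ⟨k, hk⟩ := exists_bilin_toQ_eq_intCast hint (Pi.single v 1) m
      rw [toQ_single] at hk
      rw [hk] at hBv ⊢
      have : k < 0 := by exact_mod_cast hBv
      exact_mod_cast Int.le_sub_one_of_lt this
    have hm' : 0 ≤ m - Pi.single v 1 := by
      intro w
      obtain rfl | hwv := eq_or_ne w v
      · have : 0 < m w := by simpa [toQ] using hv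
        simp
        omega
      · simpa [hwv] using hm w
    have ih' := ih hm' (by simp [Finset.sum_sub_distrib, hn])
    rw [toQ_sub, toQ_single] at ih'
    rw [chi_neg_eq_chi_neg_sub_single hsymm hZK _ v]
    linarith

lemma chi_toQ_posPart_le (hsymm : ∀ x y : V → ℚ, B x y = B y x)
    (hint : ∀ v w : V, ∃ n : ℤ, B (Pi.single v 1) (Pi.single w 1) = n)
    (hoff : ∀ v w : V, v ≠ w → 0 ≤ B (Pi.single v 1) (Pi.single w 1))
    (hneg : ∀ x : V → ℚ, x ≠ 0 → B x x < 0)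
    (hZK : ∀ v, B ZK (Pi.single v 1) = B (Pi.single v 1) (Pi.single v 1) + 2) (l : V → ℤ) :
    chi B ZK (toQ l⁺) ≤ chi B ZK (toQ l) := by
  have hsplit : toQ l = toQ l⁺ + -toQ l⁻ := by
    rw [← sub_eq_add_neg, ← toQ_sub, posPart_sub_negPart]
  have hcross := bilin_posPart_negPart_nonneg hoff (toQ l)
  have hnegPart := chi_neg_toQ_nonneg hsymm hint hneg hZK (negPart_nonneg l)
  rw [toQ_negPart] at hnegPart
  rw [hsplit, chi_add hsymm, map_neg, toQ_posPart, toQ_negPart]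
  linarith

end

theorem chi_min_eq_min_effective_general
    {V : Type*} [Fintype V] [DecidableEq V]
    (B : LinearMap.BilinForm ℚ (V → ℚ))
    (hsymm : ∀ x y : V → ℚ, B x y = B y x)
    (hint : ∀ v w : V, ∃ n : ℤ, B (Pi.single v 1) (Pi.single w 1) = (n : ℚ))
    (hoff : ∀ v w : V, v ≠ w → 0 ≤ B (Pi.single v 1) (Pi.single w 1))
    (hneg : ∀ x : V → ℚ, x ≠ 0 → B x x < 0)
    (ZK : V → ℚ)
    (hZK : ∀ v : V, B ZK (Pi.single v 1) = B (Pi.single v 1) (Pi.single v 1) + 2)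
    (χ : (V → ℚ) → ℚ)
    (hχ : ∀ x : V → ℚ, χ x = -(B x (x - ZK)) / 2) :
    ∃ μ : ℚ,
      IsLeast (Set.range (fun l : V → ℤ => χ (toQ l))) μ ∧
      IsLeast ((fun l : V → ℤ => χ (toQ l)) '' {l | 0 ≤ l}) μ := by
  obtain rfl : χ = chi B ZK := funext hχ
  have hnonpos : ∀ x, B x x ≤ 0 := fun x => by
    obtain rfl | hx := eq_or_ne x 0
    · simp
    · exact (hneg x hx).le
  obtain ⟨μ, ⟨l₀, hl₀⟩, hμ⟩ := exists_isLeast_of_bddBelow_of_two_mul_int (Set.range_nonempty _)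
    ⟨B ZK ZK / 8, Set.forall_mem_range.2 fun _ => le_chi hsymm hnonpos _⟩
    (Set.forall_mem_range.2 (exists_two_mul_chi_toQ_eq_intCast hsymm hint hZK))
  have hpos : chi B ZK (toQ l₀⁺) = μ :=
    le_antisymm (hl₀ ▸ chi_toQ_posPart_le hsymm hint hoff hneg hZK l₀) (hμ ⟨_, rfl⟩)
  exact ⟨μ, ⟨⟨l₀, hl₀⟩, hμ⟩, ⟨⟨l₀⁺, posPart_nonneg l₀, hpos⟩,
    fun _ ⟨l, _, hl⟩ => hμ ⟨l, hl⟩⟩⟩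

/-- The minimum of `χ` over `ℤ^V` equals the minimum of `χ` over
`{l ∈ ℤ^V : l ≥ 0}` (both minima exist). -/
theorem chi_min_eq_min_effective
    {V : Type*} [Fintype V] [Nonempty V] [DecidableEq V]
    (B : LinearMap.BilinForm ℚ (V → ℚ))
    (hsymm : ∀ x y : V → ℚ, B x y = B y x)
    (hint : ∀ v w : V, ∃ n : ℤ, B (Pi.single v 1) (Pi.single w 1) = (n : ℚ))
    (hoff : ∀ v w : V, v ≠ w → 0 ≤ B (Pi.single v 1) (Pi.single w 1))
    (hneg : ∀ x : V → ℚ, x ≠ 0 → B x x < 0)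
    (ZK : V → ℚ)
    (hZK : ∀ v : V, B ZK (Pi.single v 1) = B (Pi.single v 1) (Pi.single v 1) + 2)
    (χ : (V → ℚ) → ℚ)
    (hχ : ∀ x : V → ℚ, χ x = -(B x (x - ZK)) / 2) :
    ∃ μ : ℚ,
      IsLeast (Set.range (fun l : V → ℤ => χ (toQ l))) μ ∧
      IsLeast ((fun l : V → ℤ => χ (toQ l)) '' {l | 0 ≤ l}) μ :=
  chi_min_eq_min_effective_general B hsymm hint hoff hneg ZK hZK χ hχ
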